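/- The map b ↦ 𝒜(b) from ℝ³ to the 3×3 real matrices (with 𝒜(0) := 0 and, for b ≠ 0, 𝒜(b) := (√(8π log 2)/√15) |b| (b ⊗ b)/|b|² + (4√(π log 2)/√15) |b| ( I − (b ⊗ b)/|b|² )) is globally Lipschitz continuous on ℝ³ and has linear growth: there exists L > 0 such that ‖𝒜(b) − 𝒜(b′)‖ ≤ L |b − b′| for all b, b′ ∈ ℝ³ and ‖𝒜(b)‖ ≤ L |b| for all b ∈ ℝ³. -/

import Mathlib

/-!
Off the origin `𝒜(b) = c₂ |b| I + (c₁ - c₂) (b ⊗ b) / |b|`, with `c₁`, `c₂` the two coefficients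
of `𝒜`, and this formula also holds at `0`.
The norm is 1-Lipschitz, and each entry `b_α b_β / |b|` of the second term is 3-Lipschitz:
for `|b'| ≤ |b|` the difference splits into two terms bounded by `|b - b'|` through the change
of the numerator and one bounded by `|b| - |b'|` through the change of the denominator.
Linear growth is the Lipschitz bound at `b' = 0`, since `𝒜(0) = 0`.
-/
noncomputable section

/-- Euclidean norm on `ℝ³ = Fin 3 → ℝ`. -/
def enorm3 (b : Fin 3 → ℝ) : ℝ := Real.sqrt (∑ i, (b i) ^ 2)

open scoped Classical in
/-- `𝒜(0) = 0` and, for `b ≠ 0`,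
`𝒜(b) = (√(8π log 2)/√15)|b|(b⊗b)/|b|² + (4√(π log 2)/√15)|b|(I − (b⊗b)/|b|²)`. -/
def Amat (b : Fin 3 → ℝ) : Matrix (Fin 3) (Fin 3) ℝ :=
  if b = 0 then 0 else
    Matrix.of fun α β =>
      (Real.sqrt (8 * Real.pi * Real.log 2) / Real.sqrt 15) * enorm3 b *
          (b α * b β / enorm3 b ^ 2)
        + (4 * Real.sqrt (Real.pi * Real.log 2) / Real.sqrt 15) * enorm3 b *
          ((if α = β then (1 : ℝ) else 0) - b α * b β / enorm3 b ^ 2)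

theorem abs_mul_div_le_of_abs_le {x y n d : ℝ} (hx : |x| ≤ d) (hy : |y| ≤ n) :
    |x * y / n| ≤ d := by
  rcases (abs_nonneg y |>.trans hy).eq_or_lt with rfl | hn
  · simpa using (abs_nonneg x).trans hx
  · rw [abs_div, abs_mul, abs_of_pos hn, div_le_iff₀ hn]
    exact mul_le_mul hx hy (abs_nonneg y) ((abs_nonneg x).trans hx)

theorem abs_mul_div_sub_mul_div_le {a c n a' c' n' d : ℝ} (ha : |a| ≤ n) (hc : |c| ≤ n)
    (ha' : |a'| ≤ n') (hc' : |c'| ≤ n') (hnn' : n' ≤ n) (hda : |a - a'| ≤ d)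
    (hdc : |c - c'| ≤ d) (hdn : n - n' ≤ d) :
    |a * c / n - a' * c' / n'| ≤ 3 * d := by
  rcases (abs_nonneg a' |>.trans ha').eq_or_lt with rfl | hn'
  · have ha'0 : a' = 0 := abs_nonpos_iff.mp ha'
    have hac : |a * c / n| ≤ d := abs_mul_div_le_of_abs_le (ha.trans (by linarith)) hc
    simp only [ha'0, zero_mul, div_zero, sub_zero]
    linarith [abs_nonneg (a * c / n)]
  have hq : |a' * c' / n'| ≤ n := by
    rw [abs_div, abs_mul, abs_of_pos hn', div_le_iff₀ hn']
    nlinarith [abs_nonneg a', abs_nonneg c']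
  have hn : 0 < n := hn'.trans_le hnn'
  have split : a * c / n - a' * c' / n' =
      (a - a') * c / n + (c - c') * a' / n - (n - n') * (a' * c' / n') / n := by
    field_simp
    ring
  calc |a * c / n - a' * c' / n'|
      ≤ |(a - a') * c / n| + |(c - c') * a' / n| + |(n - n') * (a' * c' / n') / n| := by
        rw [split]
        exact (abs_sub _ _).trans (add_le_add_left (abs_add_le _ _) _)
    _ ≤ d + d + d := by
        gcongr
        · exact abs_mul_div_le_of_abs_le hda hc
        · exact abs_mul_div_le_of_abs_le hdc (ha'.trans hnn')
        · exact abs_mul_div_le_of_abs_le ((abs_of_nonneg (sub_nonneg.2 hnn')).le.trans hdn) hq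
    _ = 3 * d := by ring

theorem enorm3_eq_norm (b : Fin 3 → ℝ) : enorm3 b = ‖WithLp.toLp 2 b‖ := by
  simp [enorm3, EuclideanSpace.norm_eq]

theorem abs_apply_le_enorm3 (b : Fin 3 → ℝ) (i : Fin 3) : |b i| ≤ enorm3 b := by
  simpa [enorm3_eq_norm] using PiLp.norm_apply_le (WithLp.toLp 2 b) i

theorem enorm3_sub_comm (b b' : Fin 3 → ℝ) : enorm3 (b - b') = enorm3 (b' - b) := by
  simpa [enorm3_eq_norm] using norm_sub_rev (WithLp.toLp 2 b) (WithLp.toLp 2 b')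

theorem abs_enorm3_sub_enorm3_le (b b' : Fin 3 → ℝ) :
    |enorm3 b - enorm3 b'| ≤ enorm3 (b - b') := by
  simpa [enorm3_eq_norm] using abs_norm_sub_norm_le (WithLp.toLp 2 b) (WithLp.toLp 2 b')

theorem abs_mul_div_enorm3_sub_le (b b' : Fin 3 → ℝ) (α β : Fin 3) :
    |b α * b β / enorm3 b - b' α * b' β / enorm3 b'| ≤ 3 * enorm3 (b - b') := by
  wlog h : enorm3 b' ≤ enorm3 b generalizing b b'
  · rw [abs_sub_comm, enorm3_sub_comm]
    exact this b' b (le_of_not_ge h)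
  have hd i : |b i - b' i| ≤ enorm3 (b - b') := abs_apply_le_enorm3 (b - b') i
  exact abs_mul_div_sub_mul_div_le (abs_apply_le_enorm3 b α) (abs_apply_le_enorm3 b β)
    (abs_apply_le_enorm3 b' α) (abs_apply_le_enorm3 b' β) h (hd α) (hd β)
    ((le_abs_self _).trans (abs_enorm3_sub_enorm3_le b b'))

local notation "c₁" => Real.sqrt (8 * Real.pi * Real.log 2) / Real.sqrt 15
local notation "c₂" => 4 * Real.sqrt (Real.pi * Real.log 2) / Real.sqrt 15

theorem Amat_zero : Amat 0 = 0 := if_pos rfl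

theorem Amat_apply (b : Fin 3 → ℝ) (α β : Fin 3) :
    Amat b α β = (c₁ - c₂) * (b α * b β / enorm3 b)
      + c₂ * enorm3 b * (1 : Matrix (Fin 3) (Fin 3) ℝ) α β := by
  by_cases hb : b = 0
  · simp [hb, Amat_zero, enorm3]
  have hn : enorm3 b ≠ 0 := by simpa [enorm3_eq_norm] using hb
  rw [Amat, if_neg hb, Matrix.of_apply, Matrix.one_apply]
  field_simp
  ring

theorem abs_Amat_sub_Amat_le (b b' : Fin 3 → ℝ) (α β : Fin 3) :
    |Amat b α β - Amat b' α β| ≤ (3 * |c₁ - c₂| + c₂) * enorm3 (b - b') := by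
  have hδ : |(1 : Matrix (Fin 3) (Fin 3) ℝ) α β| ≤ 1 := by
    rw [Matrix.one_apply]
    split_ifs <;> simp
  calc |Amat b α β - Amat b' α β|
      = |(c₁ - c₂) * (b α * b β / enorm3 b - b' α * b' β / enorm3 b')
          + c₂ * (enorm3 b - enorm3 b') * (1 : Matrix (Fin 3) (Fin 3) ℝ) α β| := by
        rw [Amat_apply, Amat_apply]
        ring_nf
    _ ≤ |c₁ - c₂| * (3 * enorm3 (b - b')) + c₂ * enorm3 (b - b') * 1 := by
        refine (abs_add_le _ _).trans (add_le_add ?_ ?_)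
        · rw [abs_mul]
          gcongr
          exact abs_mul_div_enorm3_sub_le b b' α β
        · rw [abs_mul, abs_mul, abs_of_pos (by positivity : (0 : ℝ) < c₂)]
          exact (mul_le_mul_of_nonneg_left hδ (by positivity)).trans
            (by gcongr; exact abs_enorm3_sub_enorm3_le b b')
    _ = (3 * |c₁ - c₂| + c₂) * enorm3 (b - b') := by ring

/-- The map `b ↦ 𝒜(b)` is globally Lipschitz continuous and has linear
growth; the matrix norm is taken to be the entrywise sup norm (a fixed norm, equivalent to
the operator norm). -/
theorem Amat_lipschitz_linear_growth :
    ∃ L : ℝ, 0 < L ∧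
      (∀ b b' : Fin 3 → ℝ, ∀ α β : Fin 3,
        |Amat b α β - Amat b' α β| ≤ L * enorm3 (b - b')) ∧
      (∀ b : Fin 3 → ℝ, ∀ α β : Fin 3, |Amat b α β| ≤ L * enorm3 b) := by
  refine ⟨3 * |c₁ - c₂| + c₂, by positivity, abs_Amat_sub_Amat_le, fun b α β => ?_⟩
  simpa [Amat_zero] using abs_Amat_sub_Amat_le b 0 α β
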